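/- arXiv:1909.11462 — 8 statements merged into one kernel-verified Lean document; each statement's English description precedes it below -/
import Mathlib

section
/- Let V : ℝ → ℝ^N be differentiable with derivative V'(t), let p : ℝ → ℝ^P, and suppose for all t: (i) M V(t) = 0 (discrete divergence-free constraint) and (ii) Ω V'(t) = −C̃(V(t)) V(t) + ν D V(t) − G p(t) (semi-discrete momentum equation without body forces). Then the discrete kinetic energy K_h(t) := ½ V(t)ᵀ Ω V(t) satisfies, at every t, d/dt K_h(t) = −ν ‖Q V(t)‖², where ‖·‖ is the Euclidean norm. In particular the kinetic energy is nonincreasing for ν ≥ 0 and exactly conserved for ν = 0. -/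
/-!
Testing the momentum equation against `V` gives `d/dt K_h = Vᵀ Ω V'`, since `Ω` is symmetric.
Each term of the right-hand side then contributes separately: convection does no work because
`C̃(V)` is skew-symmetric, pressure does no work because `Vᵀ Mᵀ p = pᵀ (M V) = 0`, and diffusion
contributes `ν Vᵀ D V = -ν ‖Q V‖²`.
-/

open Matrix

section Calculus

variable {𝕜 : Type*} [NontriviallyNormedField 𝕜] {m n : Type*} [Fintype n]
  {f g : 𝕜 → n → 𝕜} {f' g' : n → 𝕜} {t : 𝕜}

theorem HasDerivAt.dotProduct (hf : HasDerivAt f f' t) (hg : HasDerivAt g g' t) :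
    HasDerivAt (fun s => f s ⬝ᵥ g s) (f' ⬝ᵥ g t + f t ⬝ᵥ g') t := by
  simp only [_root_.dotProduct, ← Finset.sum_add_distrib]
  exact HasDerivAt.fun_sum fun i _ => (hasDerivAt_pi.mp hf i).mul (hasDerivAt_pi.mp hg i)

theorem HasDerivAt.mulVec (A : Matrix m n 𝕜) (hf : HasDerivAt f f' t) :
    HasDerivAt (fun s => A *ᵥ f s) (A *ᵥ f') t :=
  hasDerivAt_pi.mpr fun i =>
    ((hasDerivAt_const t (A i)).dotProduct hf).congr_deriv (by simp [Matrix.mulVec])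

theorem HasDerivAt.dotProduct_mulVec_self {A : Matrix n n 𝕜} (hA : A.IsSymm)
    (hf : HasDerivAt f f' t) :
    HasDerivAt (fun s => f s ⬝ᵥ (A *ᵥ f s)) (2 * (f t ⬝ᵥ (A *ᵥ f'))) t := by
  convert hf.dotProduct (hf.mulVec A) using 1
  rw [two_mul, ← dotProduct_transpose_mulVec, hA.eq]

end Calculus

section QuadraticForms

variable {R : Type*} {m n : Type*} [Fintype m] [Fintype n]

theorem dotProduct_mulVec_self_eq_zero_of_transpose_eq_neg [CommRing R] [NoZeroDivisors R]
    [CharZero R] {A : Matrix n n R} (hA : Aᵀ = -A) (v : n → R) : v ⬝ᵥ (A *ᵥ v) = 0 := by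
  have h := dotProduct_transpose_mulVec A v v
  rwa [hA, neg_mulVec, dotProduct_neg, CharZero.neg_eq_self_iff] at h

theorem dotProduct_transpose_mulVec_eq_zero [CommSemiring R] {A : Matrix m n R} {v : n → R}
    (hv : A *ᵥ v = 0) (w : m → R) : v ⬝ᵥ (Aᵀ *ᵥ w) = 0 := by
  rw [dotProduct_transpose_mulVec, hv, dotProduct_zero]

theorem dotProduct_transpose_mul_self_mulVec [CommSemiring R] (A : Matrix m n R) (v : n → R) :
    v ⬝ᵥ ((Aᵀ * A) *ᵥ v) = (A *ᵥ v) ⬝ᵥ (A *ᵥ v) := by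
  rw [← mulVec_mulVec, dotProduct_transpose_mulVec]

end QuadraticForms

theorem semidiscrete_energy_equation_general
    (N P NQ : ℕ)
    (Ω : Matrix (Fin N) (Fin N) ℝ) (hΩdiag : Ω.IsDiag)
    (M : Matrix (Fin P) (Fin N) ℝ) (G : Matrix (Fin N) (Fin P) ℝ) (hG : G = -Mᵀ)
    (C : (Fin N → ℝ) → Matrix (Fin N) (Fin N) ℝ)
    (hC : ∀ w : Fin N → ℝ, (C w)ᵀ = -(C w))
    (Q : Matrix (Fin NQ) (Fin N) ℝ) (D : Matrix (Fin N) (Fin N) ℝ)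
    (hD : D = -(Qᵀ * Q))
    (ν : ℝ)
    (V V' : ℝ → Fin N → ℝ) (p : ℝ → Fin P → ℝ)
    (hV : ∀ t, HasDerivAt V (V' t) t)
    (hdiv : ∀ t, M *ᵥ V t = 0)
    (hmom : ∀ t, Ω *ᵥ V' t = -(C (V t) *ᵥ V t) + ν • (D *ᵥ V t) - G *ᵥ p t) :
    ∀ t, HasDerivAt (fun s => (1/2) * (V s ⬝ᵥ (Ω *ᵥ V s)))
      (-ν * ((Q *ᵥ V t) ⬝ᵥ (Q *ᵥ V t))) t := by
  intro t
  have hpower : V t ⬝ᵥ (Ω *ᵥ V' t) = -ν * ((Q *ᵥ V t) ⬝ᵥ (Q *ᵥ V t)) := by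
    rw [hmom t, hG, hD]
    simp only [neg_mulVec, dotProduct_add, dotProduct_sub, dotProduct_neg,
      dotProduct_smul, smul_eq_mul,
      dotProduct_mulVec_self_eq_zero_of_transpose_eq_neg (hC (V t)),
      dotProduct_transpose_mulVec_eq_zero (hdiv t), dotProduct_transpose_mul_self_mulVec]
    ring
  refine (((hV t).dotProduct_mulVec_self hΩdiag.isSymm).const_mul (1 / 2)).congr_deriv ?_
  rw [hpower]
  ring

/-- Semi-discrete kinetic energy equation: for the energy-conserving
staggered-grid FOM (skew-symmetric convection `C̃`, diffusion `D = −QᵀQ`,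
pressure gradient `G = −Mᵀ`, divergence-free velocity `M V = 0`), the
discrete kinetic energy `K_h = ½ Vᵀ Ω V` satisfies `dK_h/dt = −ν ‖Q V‖²`. -/
theorem semidiscrete_energy_equation
    (N P NQ : ℕ)
    (Ω : Matrix (Fin N) (Fin N) ℝ) (hΩdiag : Ω.IsDiag) (hΩpos : ∀ i, 0 < Ω i i)
    (M : Matrix (Fin P) (Fin N) ℝ) (G : Matrix (Fin N) (Fin P) ℝ) (hG : G = -Mᵀ)
    (C : (Fin N → ℝ) → Matrix (Fin N) (Fin N) ℝ)
    (hC : ∀ w : Fin N → ℝ, (C w)ᵀ = -(C w))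
    (Q : Matrix (Fin NQ) (Fin N) ℝ) (D : Matrix (Fin N) (Fin N) ℝ)
    (hD : D = -(Qᵀ * Q))
    (ν : ℝ) (hν : 0 ≤ ν)
    (V V' : ℝ → Fin N → ℝ) (p : ℝ → Fin P → ℝ)
    (hV : ∀ t, HasDerivAt V (V' t) t)
    (hdiv : ∀ t, M *ᵥ V t = 0)
    (hmom : ∀ t, Ω *ᵥ V' t = -(C (V t) *ᵥ V t) + ν • (D *ᵥ V t) - G *ᵥ p t) :
    ∀ t, HasDerivAt (fun s => (1/2) * (V s ⬝ᵥ (Ω *ᵥ V s)))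
      (-ν * ((Q *ᵥ V t) ⬝ᵥ (Q *ᵥ V t))) t :=
  semidiscrete_energy_equation_general N P NQ Ω hΩdiag M G hG C hC Q D hD ν V V' p hV hdiv hmom
end

section
/- Let X be an N×K real matrix of velocity snapshots whose columns are discretely divergence-free, i.e. M X = 0 (the P×K zero matrix), and let Ω be an N×N diagonal matrix with strictly positive diagonal entries. If φ ∈ ℝ^N is an eigenvector of the weighted correlation operator in the sense that X Xᵀ Ω φ = λ φ with λ ≠ 0, then φ is discretely divergence-free: M φ = 0. Consequently, every POD mode corresponding to a nonzero singular value is divergence-free, and any ROM velocity field V_r = Φ a built from such modes satisfies M V_r = 0 for all coefficient vectors a. -/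
open Matrix

/-- POD modes of divergence-free snapshots are divergence-free: if the columns of
the snapshot matrix `X` satisfy `M X = 0` and `φ` is an eigenvector of the weighted
correlation operator `X Xᵀ Ω` with nonzero eigenvalue, then `M φ = 0`. -/
theorem pod_mode_divergence_free
    (N P K : ℕ)
    (M : Matrix (Fin P) (Fin N) ℝ)
    (Ω : Matrix (Fin N) (Fin N) ℝ) (hΩdiag : Ω.IsDiag) (hΩpos : ∀ i, 0 < Ω i i)
    (X : Matrix (Fin N) (Fin K) ℝ) (hX : M * X = 0)
    (φ : Fin N → ℝ) (lam : ℝ) (hlam : lam ≠ 0)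
    (heig : (X * Xᵀ * Ω) *ᵥ φ = lam • φ) :
    M *ᵥ φ = 0 := by
  have h : M *ᵥ ((X * Xᵀ * Ω) *ᵥ φ) = 0 := by
    rw [mulVec_mulVec, show M * (X * Xᵀ * Ω) = (M * X) * (Xᵀ * Ω) by simp [Matrix.mul_assoc], hX,
      Matrix.zero_mul, zero_mulVec]
  rw [heig, mulVec_smul] at h
  exact by simpa [hlam] using smul_eq_zero.mp h
end

section
/- Consider one step of the implicit midpoint rule applied to the reduced-order model: given aⁿ ∈ ℝ^m and Δt ∈ ℝ, suppose aⁿ⁺¹ ∈ ℝ^m satisfies (aⁿ⁺¹ − aⁿ) = Δt · Φᵀ ( −C̃(Φ a^{n+1/2}) Φ a^{n+1/2} + ν D Φ a^{n+1/2} ), where a^{n+1/2} := ½(aⁿ + aⁿ⁺¹). Then the fully discrete ROM kinetic energy K_r := ½ ‖a‖² (Euclidean norm) satisfies the exact energy equality ½ ‖aⁿ⁺¹‖² − ½ ‖aⁿ‖² = −ν Δt ‖Q Φ a^{n+1/2}‖². Hence the fully discrete ROM solution is stable: for ν ≥ 0 and Δt ≥ 0 the energy does not increase, and for ν = 0 it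 is exactly conserved, independent of Δt and of the number of modes m. -/
open Matrix

lemma mulVec_dotProduct_adj {n p : ℕ} (A : Matrix (Fin n) (Fin p) ℝ)
    (x : Fin p → ℝ) (y : Fin n → ℝ) :
    (A *ᵥ x) ⬝ᵥ y = x ⬝ᵥ (Aᵀ *ᵥ y) := by
  rw [dotProduct_comm, Matrix.dotProduct_mulVec, Matrix.mulVec_transpose,
    dotProduct_comm x]

/-- Fully discrete ROM energy equality for one step of the implicit midpoint
rule: `½‖aⁿ⁺¹‖² − ½‖aⁿ‖² = −ν Δt ‖Q Φ a^{n+1/2}‖²` (Euclidean norm squared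
expressed via dot products), for any time step `Δt` and number of modes `m`. -/
theorem rom_implicit_midpoint_energy_equality
    (N NQ m : ℕ)
    (C : (Fin N → ℝ) → Matrix (Fin N) (Fin N) ℝ)
    (hC : ∀ w : Fin N → ℝ, (C w)ᵀ = -(C w))
    (Q : Matrix (Fin NQ) (Fin N) ℝ) (D : Matrix (Fin N) (Fin N) ℝ)
    (hD : D = -(Qᵀ * Q))
    (ν : ℝ) (hν : 0 ≤ ν) (Δt : ℝ)
    (Φ : Matrix (Fin N) (Fin m) ℝ)
    (an anext : Fin m → ℝ) (amid : Fin m → ℝ)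
    (hmid : amid = (1/2 : ℝ) • (an + anext))
    (hstep : anext - an
      = Δt • (Φᵀ *ᵥ (-(C (Φ *ᵥ amid) *ᵥ (Φ *ᵥ amid)) + ν • (D *ᵥ (Φ *ᵥ amid))))) :
    (1/2) * (anext ⬝ᵥ anext) - (1/2) * (an ⬝ᵥ an)
      = -(ν * Δt) * ((Q *ᵥ (Φ *ᵥ amid)) ⬝ᵥ (Q *ᵥ (Φ *ᵥ amid))) := by
  set w := Φ *ᵥ amid with hw
  have hskew : (C w *ᵥ w) ⬝ᵥ w = 0 := by
    have h1 : (C w *ᵥ w) ⬝ᵥ w = -((C w *ᵥ w) ⬝ᵥ w) := by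
      conv_lhs => rw [mulVec_dotProduct_adj, hC w, Matrix.neg_mulVec,
        dotProduct_neg, dotProduct_comm]
    linarith
  have hdiff : (D *ᵥ w) ⬝ᵥ w = -((Q *ᵥ w) ⬝ᵥ (Q *ᵥ w)) := by
    rw [hD, Matrix.neg_mulVec, neg_dotProduct, ← Matrix.mulVec_mulVec,
      mulVec_dotProduct_adj Qᵀ, Matrix.transpose_transpose,
      dotProduct_comm]
  have key : (anext - an) ⬝ᵥ amid
      = Δt * ((-(C w *ᵥ w) + ν • (D *ᵥ w)) ⬝ᵥ w) := by
    rw [hstep, smul_dotProduct, smul_eq_mul, mulVec_dotProduct_adj,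
      Matrix.transpose_transpose]
  have expand : (anext - an) ⬝ᵥ amid
      = (1/2) * (anext ⬝ᵥ anext) - (1/2) * (an ⬝ᵥ an) := by
    rw [hmid]
    have hcomm : an ⬝ᵥ anext = anext ⬝ᵥ an := dotProduct_comm _ _
    simp [sub_dotProduct, dotProduct_smul, dotProduct_add, hcomm]
    ring
  rw [← expand, key, add_dotProduct, neg_dotProduct, hskew,
    smul_dotProduct, smul_eq_mul, hdiff]
  ring
end

section
/- Let a : ℕ → ℝ^m be a sequence generated by the implicit-midpoint reduced-order model: for every n, aⁿ⁺¹ − aⁿ = Δt · Φᵀ ( −C̃(Φ a^{n+1/2}) Φ a^{n+1/2} + ν D Φ a^{n+1/2} ) with a^{n+1/2} := ½(aⁿ + aⁿ⁺¹), where Δt ≥ 0 and ν ≥ 0. Then the ROM solution is unconditionally nonlinearly stable: ‖aⁿ‖ ≤ ‖a⁰‖ (Euclidean norm) for all n ∈ ℕ, and in the inviscid case ν = 0 the kinetic energy is exactly conserved for all time steps: ‖aⁿ‖ = ‖a⁰‖ for all n ∈ ℕ. -/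
open Matrix

private lemma dot_self_nonneg {k : ℕ} (v : Fin k → ℝ) : 0 ≤ v ⬝ᵥ v :=
  Finset.sum_nonneg fun i _ => mul_self_nonneg (v i)

/-- Unconditional nonlinear stability of the implicit-midpoint ROM: the
Euclidean norm `‖aⁿ‖ = √(aⁿ ⬝ᵥ aⁿ)` never increases, and for `ν = 0` it is
exactly conserved, for every time step `Δt ≥ 0` and any number of modes. -/
theorem rom_implicit_midpoint_unconditional_stability
    (N NQ m : ℕ)
    (C : (Fin N → ℝ) → Matrix (Fin N) (Fin N) ℝ)
    (hC : ∀ w : Fin N → ℝ, (C w)ᵀ = -(C w))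
    (Q : Matrix (Fin NQ) (Fin N) ℝ) (D : Matrix (Fin N) (Fin N) ℝ)
    (hD : D = -(Qᵀ * Q))
    (ν : ℝ) (hν : 0 ≤ ν) (Δt : ℝ) (hΔt : 0 ≤ Δt)
    (Φ : Matrix (Fin N) (Fin m) ℝ)
    (a : ℕ → Fin m → ℝ)
    (hstep : ∀ n : ℕ,
      a (n + 1) - a n
        = Δt • (Φᵀ *ᵥ (-(C (Φ *ᵥ ((1/2 : ℝ) • (a n + a (n + 1))))
              *ᵥ (Φ *ᵥ ((1/2 : ℝ) • (a n + a (n + 1)))))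
            + ν • (D *ᵥ (Φ *ᵥ ((1/2 : ℝ) • (a n + a (n + 1)))))))) :
    (∀ n : ℕ, Real.sqrt (a n ⬝ᵥ a n) ≤ Real.sqrt (a 0 ⬝ᵥ a 0)) ∧
    (ν = 0 → ∀ n : ℕ, Real.sqrt (a n ⬝ᵥ a n) = Real.sqrt (a 0 ⬝ᵥ a 0)) := by
  have key : ∀ n : ℕ, a (n+1) ⬝ᵥ a (n+1)
      = a n ⬝ᵥ a n
        - 2 * Δt * ν *
          ((Q *ᵥ (Φ *ᵥ ((1/2 : ℝ) • (a n + a (n + 1))))) ⬝ᵥ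
           (Q *ᵥ (Φ *ᵥ ((1/2 : ℝ) • (a n + a (n + 1)))))) := by
    intro n
    set u : Fin N → ℝ := Φ *ᵥ ((1/2 : ℝ) • (a n + a (n + 1))) with hu
    have hs := hstep n
    -- the skew-symmetric term vanishes
    have hskew : (C u *ᵥ u) ⬝ᵥ u = 0 := by
      have h1 : (C u *ᵥ u) ⬝ᵥ u = -((C u *ᵥ u) ⬝ᵥ u) := by
        conv_lhs => rw [dotProduct_comm, dotProduct_mulVec, ← mulVec_transpose,
          hC u, neg_mulVec, neg_dotProduct]
      linarith
    -- the diffusion term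
    have hdiffu : (D *ᵥ u) ⬝ᵥ u = -((Q *ᵥ u) ⬝ᵥ (Q *ᵥ u)) := by
      rw [hD, neg_mulVec, neg_dotProduct, ← mulVec_mulVec, dotProduct_comm,
        dotProduct_mulVec, ← mulVec_transpose, dotProduct_comm, transpose_transpose]
    -- energy difference
    have hsum : Φ *ᵥ (a n + a (n + 1)) = (2 : ℝ) • u := by
      rw [hu, mulVec_smul, smul_smul]
      norm_num
    have hdiff : a (n+1) ⬝ᵥ a (n+1) - a n ⬝ᵥ a n
        = (a (n+1) - a n) ⬝ᵥ (a n + a (n+1)) := by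
      rw [sub_dotProduct, dotProduct_add, dotProduct_add,
        dotProduct_comm (a n) (a (n+1))]
      ring
    have hrhs : (a (n+1) - a n) ⬝ᵥ (a n + a (n+1))
        = -(2 * Δt * ν * ((Q *ᵥ u) ⬝ᵥ (Q *ᵥ u))) := by
      rw [hs, smul_dotProduct]
      rw [show (Φᵀ *ᵥ (-(C u *ᵥ u) + ν • (D *ᵥ u))) ⬝ᵥ (a n + a (n+1))
          = (-(C u *ᵥ u) + ν • (D *ᵥ u)) ⬝ᵥ (Φ *ᵥ (a n + a (n+1))) by
        rw [mulVec_transpose, dotProduct_mulVec]]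
      rw [hsum, dotProduct_smul, add_dotProduct, neg_dotProduct, hskew,
        smul_dotProduct, hdiffu]
      simp only [smul_eq_mul]
      ring
    linarith [hdiff, hrhs]
  have mono : ∀ n : ℕ, a n ⬝ᵥ a n ≤ a 0 ⬝ᵥ a 0 := by
    intro n
    induction n with
    | zero => exact le_refl _
    | succ k ih =>
      have hk := key k
      have hq := dot_self_nonneg (Q *ᵥ (Φ *ᵥ ((1/2 : ℝ) • (a k + a (k + 1)))))
      have hprod : 0 ≤ 2 * Δt * ν *
          ((Q *ᵥ (Φ *ᵥ ((1/2 : ℝ) • (a k + a (k + 1))))) ⬝ᵥ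
           (Q *ᵥ (Φ *ᵥ ((1/2 : ℝ) • (a k + a (k + 1)))))) :=
        mul_nonneg (mul_nonneg (mul_nonneg (by norm_num) hΔt) hν) hq
      linarith
  constructor
  · intro n
    exact Real.sqrt_le_sqrt (mono n)
  · intro hν0 n
    have : ∀ k : ℕ, a k ⬝ᵥ a k = a 0 ⬝ᵥ a 0 := by
      intro k
      induction k with
      | zero => rfl
      | succ j ih =>
        rw [key j, hν0, ih]
        ring
    rw [this n]
end

section
/- Let Ω be an N×N real diagonal matrix with strictly positive diagonal entries and let S be the N×N diagonal matrix with S S = Ω and positive diagonal entries (S = Ω^{1/2}). Let E be an N×r real matrix with Eᵀ Ω E = I_r, let X be an N×K real matrix, set X̃ := X − E Eᵀ Ω X and X̂ := S X̃. If φ ∈ ℝ^N satisfies X̂ X̂ᵀ φ = λ φ with λ ≠ 0, then φ is orthogonal to the weighted constraint directions: Eᵀ S φ = 0 (equivalently φᵀ S E = 0). Consequently the unconstrained POD modes of the adapted snapshot matrix corresponding to nonzero eigenvalues are Ω-orthogonal to the columns of E. -/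
open Matrix

/-- Modes of the constrained SVD with nonzero eigenvalue are Ω-orthogonal to
the constraint directions: if `X̂ = Ω^{1/2}(X − E Eᵀ Ω X)` and
`X̂ X̂ᵀ φ = λ φ` with `λ ≠ 0`, then `Eᵀ Ω^{1/2} φ = 0`. -/
theorem constrained_svd_mode_orthogonal_to_constraints
    (N r K : ℕ)
    (Ω S : Matrix (Fin N) (Fin N) ℝ)
    (hΩdiag : Ω.IsDiag) (hΩpos : ∀ i, 0 < Ω i i)
    (hSdiag : S.IsDiag) (hSpos : ∀ i, 0 < S i i) (hS : S * S = Ω)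
    (E : Matrix (Fin N) (Fin r) ℝ) (hE : Eᵀ * Ω * E = 1)
    (X : Matrix (Fin N) (Fin K) ℝ)
    (φ : Fin N → ℝ) (lam : ℝ) (hlam : lam ≠ 0)
    (heig : ((S * (X - E * Eᵀ * Ω * X)) * (S * (X - E * Eᵀ * Ω * X))ᵀ) *ᵥ φ
      = lam • φ) :
    Eᵀ *ᵥ (S *ᵥ φ) = 0 := by
  set Xt := X - E * Eᵀ * Ω * X with hXt
  have hkey : Eᵀ * Ω * Xt = 0 := by
    have : Eᵀ * Ω * Xt = Eᵀ * Ω * X - (Eᵀ * Ω * E) * (Eᵀ * Ω * X) := by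
      rw [hXt, Matrix.mul_sub]
      simp only [Matrix.mul_assoc]
    rw [this, hE, Matrix.one_mul, sub_self]
  have hzero : Eᵀ * S * (S * Xt) = 0 := by
    have : Eᵀ * S * (S * Xt) = Eᵀ * (S * S) * Xt := by
      simp only [Matrix.mul_assoc]
    rw [this, hS, hkey]
  have h2 : Eᵀ * S * ((S * Xt) * (S * Xt)ᵀ) = 0 := by
    rw [← Matrix.mul_assoc, hzero, Matrix.zero_mul]
  have h3 : lam • (Eᵀ *ᵥ (S *ᵥ φ)) = 0 := by
    calc lam • (Eᵀ *ᵥ (S *ᵥ φ)) = Eᵀ *ᵥ (S *ᵥ (lam • φ)) := by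
          rw [mulVec_smul, mulVec_smul]
    _ = Eᵀ *ᵥ (S *ᵥ (((S * Xt) * (S * Xt)ᵀ) *ᵥ φ)) := by rw [heig]
    _ = (Eᵀ * S * ((S * Xt) * (S * Xt)ᵀ)) *ᵥ φ := by
          rw [mulVec_mulVec, mulVec_mulVec]
    _ = 0 := by rw [h2, zero_mulVec]
  have := smul_eq_zero.mp h3
  tauto
end

section
/- Let Ω be an N×N real diagonal matrix with strictly positive diagonal entries and let S be the diagonal matrix with S S = Ω and positive diagonal entries. Let M be a P×N real matrix, E an N×r real matrix, and X an N×K real matrix such that M E = 0 and M X = 0. Set X̃ := X − E Eᵀ Ω X and X̂ := S X̃. If φ ∈ ℝ^N satisfies X̂ X̂ᵀ φ = λ φ with λ ≠ 0, then the corresponding mode of the momentum-conserving constrained SVD is discretely divergence-free: M S⁻¹ φ = 0. -/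
open Matrix

/-- The momentum-conserving constrained-SVD modes are divergence-free: with
divergence-free constraint vectors (`M E = 0`) and snapshots (`M X = 0`), any
eigenvector `φ` of `X̂ X̂ᵀ` (with `X̂ = Ω^{1/2}(X − E Eᵀ Ω X)`) for a nonzero
eigenvalue yields a divergence-free mode: `M Ω^{-1/2} φ = 0`. -/
theorem constrained_svd_mode_divergence_free
    (N P r K : ℕ)
    (Ω S : Matrix (Fin N) (Fin N) ℝ)
    (hΩdiag : Ω.IsDiag) (hΩpos : ∀ i, 0 < Ω i i)
    (hSdiag : S.IsDiag) (hSpos : ∀ i, 0 < S i i) (hS : S * S = Ω)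
    (M : Matrix (Fin P) (Fin N) ℝ)
    (E : Matrix (Fin N) (Fin r) ℝ) (hME : M * E = 0)
    (X : Matrix (Fin N) (Fin K) ℝ) (hMX : M * X = 0)
    (φ : Fin N → ℝ) (lam : ℝ) (hlam : lam ≠ 0)
    (heig : ((S * (X - E * Eᵀ * Ω * X)) * (S * (X - E * Eᵀ * Ω * X))ᵀ) *ᵥ φ
      = lam • φ) :
    M *ᵥ (S⁻¹ *ᵥ φ) = 0 := by
  set Xt : Matrix (Fin N) (Fin K) ℝ := X - E * Eᵀ * Ω * X with hXt
  -- S has nonzero determinant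
  have hdet : S.det ≠ 0 := by
    rw [← hSdiag.diagonal_diag, Matrix.det_diagonal]
    exact Finset.prod_ne_zero_iff.mpr fun i _ => ne_of_gt (hSpos i)
  have hunit : IsUnit S.det := isUnit_iff_ne_zero.mpr hdet
  have hSinv : S⁻¹ * S = 1 := Matrix.nonsing_inv_mul S hunit
  have hMXt : M * Xt = 0 := by
    rw [hXt, Matrix.mul_sub, hMX]
    have : M * (E * Eᵀ * Ω * X) = 0 := by
      rw [show M * (E * Eᵀ * Ω * X) = M * E * (Eᵀ * Ω * X) by
        simp only [Matrix.mul_assoc], hME, Matrix.zero_mul]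
    rw [this, sub_zero]
  have key : M * S⁻¹ * (S * Xt * (S * Xt)ᵀ) = 0 := by
    have : M * S⁻¹ * (S * Xt * (S * Xt)ᵀ) = M * (S⁻¹ * S) * (Xt * (S * Xt)ᵀ) := by
      simp only [Matrix.mul_assoc]
    rw [this, hSinv, Matrix.mul_one, ← Matrix.mul_assoc, hMXt, Matrix.zero_mul]
  have h1 : M *ᵥ (S⁻¹ *ᵥ φ) = (M * S⁻¹) *ᵥ φ := (Matrix.mulVec_mulVec _ _ _)
  have h2 : lam • ((M * S⁻¹) *ᵥ φ) = 0 := by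
    rw [← Matrix.mulVec_smul, ← heig, Matrix.mulVec_mulVec,
      show M * S⁻¹ * (S * Xt * (S * Xt)ᵀ) = 0 from key, Matrix.zero_mulVec]
  rw [h1]
  have := smul_eq_zero.mp h2
  tauto
end

section
/- Let Φ be an N×m real matrix, e ∈ ℝ^N with eᵀ Ω Φ Φᵀ = eᵀ, and let F : ℝ^N → ℝ^N satisfy eᵀ F(W) = 0 for all W ∈ ℝ^N. Consider one step of the implicit midpoint rule for the ROM: aⁿ⁺¹ − aⁿ = Δt · Φᵀ F(Φ a^{n+1/2}) with a^{n+1/2} := ½(aⁿ + aⁿ⁺¹). Then the fully discrete ROM global momentum is exactly conserved: eᵀ Ω Φ aⁿ⁺¹ = eᵀ Ω Φ aⁿ, for any time step Δt. -/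
open Matrix

/-- Exact conservation of the fully discrete ROM global momentum under the
implicit midpoint rule: with the exact-projection constraint `eᵀ Ω Φ Φᵀ = eᵀ`
and a momentum-conserving right-hand side (`eᵀ F(W) = 0`), one step gives
`eᵀ Ω Φ aⁿ⁺¹ = eᵀ Ω Φ aⁿ`, for any time step `Δt`. -/
theorem rom_implicit_midpoint_momentum_conserved
    (N m : ℕ)
    (Ω : Matrix (Fin N) (Fin N) ℝ) (hΩdiag : Ω.IsDiag) (hΩpos : ∀ i, 0 < Ω i i)
    (Φ : Matrix (Fin N) (Fin m) ℝ) (e : Fin N → ℝ)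
    (hproj : e ᵥ* (Ω * Φ * Φᵀ) = e)
    (F : (Fin N → ℝ) → (Fin N → ℝ)) (hF : ∀ W : Fin N → ℝ, e ⬝ᵥ F W = 0)
    (Δt : ℝ) (an anext : Fin m → ℝ)
    (hstep : anext - an = Δt • (Φᵀ *ᵥ F (Φ *ᵥ ((1/2 : ℝ) • (an + anext))))) :
    e ⬝ᵥ (Ω *ᵥ (Φ *ᵥ anext)) = e ⬝ᵥ (Ω *ᵥ (Φ *ᵥ an)) := by
  set W := Φ *ᵥ ((1/2 : ℝ) • (an + anext)) with hW
  have key : (e ᵥ* (Ω * Φ)) ⬝ᵥ (anext - an) = 0 := by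
    rw [hstep, dotProduct_smul, dotProduct_mulVec, vecMul_vecMul, hproj, hF]
    simp
  have h1 : ∀ x : Fin m → ℝ, e ⬝ᵥ (Ω *ᵥ (Φ *ᵥ x)) = (e ᵥ* (Ω * Φ)) ⬝ᵥ x := by
    intro x
    rw [dotProduct_mulVec, dotProduct_mulVec, vecMul_vecMul]
  rw [h1, h1]
  have := dotProduct_sub (e ᵥ* (Ω * Φ)) anext an
  linarith [key, this.symm ▸ key]
end

section
/- Let M be a P×N real matrix, G := −Mᵀ, let Ω be an N×N real diagonal matrix with strictly positive diagonal entries, let L := M Ω⁻¹ G be the discrete pressure Poisson operator, and let Π be a P×M_p real matrix of pressure modes. Then the reduced Poisson operator L_r := Πᵀ L Π satisfies L_r = −(G Π)ᵀ Ω⁻¹ (G Π); in particular L_r is symmetric (L_rᵀ = L_r) and negative semidefinite: qᵀ L_r q ≤ 0 for all q ∈ ℝ^{M_p}. -/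
open Matrix

/-- The reduced pressure Poisson operator `L_r = Πᵀ L Π`, with
`L = M Ω⁻¹ G` and `G = −Mᵀ`, satisfies `L_r = −(GΠ)ᵀ Ω⁻¹ (GΠ)`; in
particular it is symmetric and negative semidefinite. -/
theorem reduced_poisson_operator_symm_negsemidef
    (N P Mp : ℕ)
    (M : Matrix (Fin P) (Fin N) ℝ) (G : Matrix (Fin N) (Fin P) ℝ) (hG : G = -Mᵀ)
    (Ω : Matrix (Fin N) (Fin N) ℝ) (hΩdiag : Ω.IsDiag) (hΩpos : ∀ i, 0 < Ω i i)
    (L : Matrix (Fin P) (Fin P) ℝ) (hL : L = M * Ω⁻¹ * G)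
    (Pm : Matrix (Fin P) (Fin Mp) ℝ)
    (Lr : Matrix (Fin Mp) (Fin Mp) ℝ) (hLr : Lr = Pmᵀ * L * Pm) :
    Lr = -((G * Pm)ᵀ * Ω⁻¹ * (G * Pm)) ∧
    Lrᵀ = Lr ∧
    ∀ q : Fin Mp → ℝ, q ⬝ᵥ (Lr *ᵥ q) ≤ 0 := by
  have hΩ : Ω = Matrix.diagonal (fun i => Ω i i) := by
    ext i j
    by_cases h : i = j
    · subst h; simp
    · simp [Matrix.diagonal, h, hΩdiag h]
  have hΩinv : Ω⁻¹ = Matrix.diagonal (fun i => (Ω i i)⁻¹) := by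
    have hne : ∀ i, Ω i i ≠ 0 := fun i => (hΩpos i).ne'
    apply Matrix.inv_eq_left_inv
    ext i j
    by_cases h : i = j
    · subst h
      simp [Matrix.mul_apply, Matrix.diagonal, Matrix.one_apply, inv_mul_cancel₀ (hne i)]
    · simp [Matrix.mul_apply, Matrix.diagonal, Matrix.one_apply, h, hΩdiag h]
  have hM : M = -Gᵀ := by rw [hG]; simp
  have h1 : Lr = -((G * Pm)ᵀ * Ω⁻¹ * (G * Pm)) := by
    rw [hLr, hL, hM]
    simp only [Matrix.transpose_mul, Matrix.neg_mul, Matrix.mul_neg, Matrix.mul_assoc,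
      Matrix.transpose_neg, Matrix.transpose_transpose, neg_neg]
  refine ⟨h1, ?_, ?_⟩
  · rw [h1]
    simp only [Matrix.transpose_neg, Matrix.transpose_mul, Matrix.transpose_transpose,
      hΩinv, Matrix.diagonal_transpose, Matrix.mul_assoc]
  · intro q
    rw [h1]
    have : q ⬝ᵥ ((-((G * Pm)ᵀ * Ω⁻¹ * (G * Pm))) *ᵥ q)
        = -(((G * Pm) *ᵥ q) ⬝ᵥ (Ω⁻¹ *ᵥ ((G * Pm) *ᵥ q))) := by
      rw [Matrix.neg_mulVec, dotProduct_neg, Matrix.mul_assoc, Matrix.mulVec_mulVec,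
        ← Matrix.mulVec_mulVec, ← Matrix.mulVec_mulVec]
      congr 1
      rw [Matrix.dotProduct_mulVec, Matrix.vecMul_transpose]
    rw [this, neg_nonpos]
    set v := (G * Pm) *ᵥ q
    rw [hΩinv]
    have : v ⬝ᵥ (Matrix.diagonal (fun i => (Ω i i)⁻¹) *ᵥ v)
        = ∑ i, (Ω i i)⁻¹ * (v i)^2 := by
      simp [dotProduct, Matrix.mulVec_diagonal]
      ring_nf
      congr 1; funext i; ring
    rw [this]
    apply Finset.sum_nonneg
    intro i _
    have := (hΩpos i).le
    positivity
end
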